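/- arXiv:math/9809098 — 2 statements merged into one kernel-verified Lean document; each statement's English description precedes it below -/
import Mathlib

section
/- Suppose h₁, h₂ ∈ C₀(M,ℂ) are nonnegative and both α-proper. Then the product h₁h₂ is α-proper, and its strict limit F ∈ C_b(M,ℂ) (the function with ‖k·p_λ(h₁h₂) − k·F‖_∞ → 0 for all k ∈ C₀(M,ℂ)) satisfies: F(x•m) = F(m) for all x ∈ G and m ∈ M, and for every ε > 0 there is a compact set K ⊆ M such that |F(m)| ≤ ε for every m ∈ M whose orbit {x•m : x ∈ G} does not meet K. -/
/-!
Write `q_λ(h)(m) = ∫ λ(x) |h(x⁻¹ • m)| dx`; it equals `p_λ(h)(m)` for `h ≥ 0`, is continuous in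
`m` and increasing in `λ`. Hence the strict limit `F₁` of `p_λ(h₁)` is the pointwise supremum of
the `q_λ(h₁)`. Since `|h₂| ≤ ‖h₂‖`, the increments of `λ ↦ q_λ(h₁h₂)` are dominated by `‖h₂‖`
times those of `λ ↦ q_λ(h₁)`, so `F := sup_λ q_λ(h₁h₂)` exists and
`0 ≤ F - q_λ(h₁h₂) ≤ ‖h₂‖ (F₁ - q_λ(h₁))`: strict convergence passes from `h₁` to `h₁h₂`.
Strict convergence is locally uniform, so `F` is continuous. Left invariance of Haar measure
turns `q_λ(h)(x • m)` into `q_{λ(x ·)}(h)(m)`, so the supremum `F` is `G`-invariant; and if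
`|h₂| ≤ δ` on the orbit of `m`, then `F(m) ≤ δ F₁(m) ≤ δ ‖F₁‖`.
-/

open MeasureTheory Filter Topology
open scoped ZeroAtInfty BoundedContinuousFunction ComplexOrder

/-- The directed set `ℬ(G)` of bounded measurable compactly supported functions
`λ : G → ℝ` with `0 ≤ λ ≤ 1`, ordered pointwise. -/
abbrev RieffelB (G : Type*) [TopologicalSpace G] [MeasurableSpace G] : Type _ :=
  {lam : G → ℝ // Measurable lam ∧ HasCompactSupport lam ∧ 0 ≤ lam ∧ lam ≤ 1}

/-- `p_λ(f)(m) = ∫ λ(x) f(x⁻¹ • m) dx`. -/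
noncomputable def pLamC0 {G : Type*} [Group G] [TopologicalSpace G] [MeasurableSpace G]
    {M : Type*} [TopologicalSpace M] [MulAction G M]
    (μ : Measure G) (lam : RieffelB G) (f : C₀(M, ℂ)) : M → ℂ :=
  fun m => ∫ x, ((lam.1 x : ℝ) : ℂ) * f (x⁻¹ • m) ∂μ

/-- A nonnegative `h ∈ C₀(M, ℂ)` is `α`-proper if there is `F ∈ C_b(M, ℂ)` such that
for every `k ∈ C₀(M, ℂ)` the net `(k · p_λ(h))_{λ ∈ ℬ(G)}` converges uniformly to `k · F`. -/
def IsProperC0 {G : Type*} [Group G] [TopologicalSpace G] [MeasurableSpace G]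
    {M : Type*} [TopologicalSpace M] [MulAction G M]
    (μ : Measure G) (h : C₀(M, ℂ)) : Prop :=
  ∃ F : M →ᵇ ℂ, ∀ k : C₀(M, ℂ), ∀ ε > (0 : ℝ), ∃ lam₀ : RieffelB G,
    ∀ lam : RieffelB G, lam₀ ≤ lam →
      ∀ m : M, ‖k m * pLamC0 μ lam h m - k m * F m‖ ≤ ε

open Set

namespace RieffelB

variable {G : Type*} [TopologicalSpace G] [MeasurableSpace G]

lemma nonneg (lam : RieffelB G) (x : G) : 0 ≤ lam.1 x := lam.2.2.2.1 x

lemma le_one (lam : RieffelB G) (x : G) : lam.1 x ≤ 1 := lam.2.2.2.2 x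

instance : OrderBot (RieffelB G) where
  bot := ⟨0, measurable_const, HasCompactSupport.zero, le_rfl, zero_le_one⟩
  bot_le lam := lam.nonneg

instance : Nonempty (RieffelB G) := ⟨⊥⟩

instance : IsDirectedOrder (RieffelB G) where
  directed lam lam' :=
    ⟨⟨fun x => max (lam.1 x) (lam'.1 x), lam.2.1.max lam'.2.1,
      lam.2.2.1.comp₂_left lam'.2.2.1 (max_self 0), fun x => le_max_of_le_left (lam.nonneg x),
      fun x => max_le (lam.le_one x) (lam'.le_one x)⟩,
    fun _ => le_max_left _ _, fun _ => le_max_right _ _⟩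

lemma integrable [OpensMeasurableSpace G] (μ : Measure G) [IsFiniteMeasureOnCompacts μ]
    (lam : RieffelB G) : Integrable lam.1 μ :=
  (integrableOn_iff_integrable_of_support_subset (subset_tsupport _)).1 <|
    IntegrableOn.of_bound lam.2.2.1.measure_lt_top lam.2.1.aestronglyMeasurable 1 <|
      ae_of_all _ fun x => by rw [Real.norm_of_nonneg (lam.nonneg x)]; exact lam.le_one x

variable [Group G] [IsTopologicalGroup G] [BorelSpace G]

def translate (x : G) (lam : RieffelB G) : RieffelB G :=
  ⟨fun z => lam.1 (x * z), lam.2.1.comp (measurable_const_mul x),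
    lam.2.2.1.comp_homeomorph (Homeomorph.mulLeft x), fun _ => lam.nonneg _,
    fun _ => lam.le_one _⟩

lemma translate_surjective (x : G) : Function.Surjective (translate x) :=
  fun lam => ⟨translate x⁻¹ lam, by ext z; simp [translate]⟩

end RieffelB

lemma ZeroAtInftyContinuousMap.norm_coe_le_norm {M E : Type*} [TopologicalSpace M]
    [SeminormedAddCommGroup E] (f : C₀(M, E)) (m : M) : ‖f m‖ ≤ ‖f‖ := by
  rw [← ZeroAtInftyContinuousMap.norm_toBCF_eq_norm]
  exact f.toBCF.norm_coe_le_norm m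

lemma ZeroAtInftyContinuousMap.exists_isCompact_norm_le {M E : Type*} [TopologicalSpace M]
    [SeminormedAddCommGroup E] (f : C₀(M, E)) {δ : ℝ} (hδ : 0 < δ) :
    ∃ K : Set M, IsCompact K ∧ ∀ m ∉ K, ‖f m‖ ≤ δ := by
  obtain ⟨K, hK, hKf⟩ := mem_cocompact.1 (Metric.tendsto_nhds.1 f.zero_at_infty' δ hδ)
  exact ⟨K, hK, fun m hm => by simpa using (show dist (f m) 0 < δ from hKf hm).le⟩

lemma exists_zeroAtInfty_eqOn_one {M : Type*} [TopologicalSpace M] [LocallyCompactSpace M]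
    [T2Space M] {K : Set M} (hK : IsCompact K) : ∃ k : C₀(M, ℂ), ∀ m ∈ K, k m = 1 := by
  obtain ⟨f, hf1, -, hfc, -⟩ :=
    exists_continuous_one_zero_of_isCompact hK isClosed_empty (disjoint_empty _)
  refine ⟨⟨⟨fun m => (f m : ℂ), by fun_prop⟩,
    (hfc.comp_left Complex.ofReal_zero).is_zero_at_infty⟩, fun m hm => ?_⟩
  simp [hf1 hm]

section StrictConvergence

variable {ι : Type*} [Preorder ι] {M : Type*} [TopologicalSpace M]

def TendstoStrictly (g : ι → M → ℝ) (F : M → ℝ) : Prop :=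
  ∀ k : C₀(M, ℂ), ∀ ε > (0 : ℝ), ∃ i₀, ∀ i, i₀ ≤ i →
    ∀ m, ‖k m‖ * |g i m - F m| ≤ ε

lemma TendstoStrictly.of_abs_sub_le {g g' : ι → M → ℝ} {F F' : M → ℝ} {C : ℝ}
    (hg : TendstoStrictly g F) (hC : 0 ≤ C)
    (hle : ∀ i m, |g' i m - F' m| ≤ C * |g i m - F m|) :
    TendstoStrictly g' F' := by
  intro k ε hε
  obtain ⟨i₀, hi₀⟩ := hg k (ε / (C + 1)) (by positivity)
  refine ⟨i₀, fun i hi m => ?_⟩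
  calc ‖k m‖ * |g' i m - F' m| ≤ C * (‖k m‖ * |g i m - F m|) := by
        rw [mul_left_comm]; exact mul_le_mul_of_nonneg_left (hle i m) (norm_nonneg _)
    _ ≤ (C + 1) * (ε / (C + 1)) :=
        mul_le_mul (by linarith) (hi₀ i hi m) (by positivity) (by linarith)
    _ = ε := mul_div_cancel₀ _ (by positivity)

lemma TendstoStrictly.tendstoLocallyUniformly [LocallyCompactSpace M] [T2Space M]
    {g : ι → M → ℝ} {F : M → ℝ} (hg : TendstoStrictly g F) :
    TendstoLocallyUniformly g F atTop := by
  refine tendstoLocallyUniformly_iff_forall_isCompact.2 fun K hK => ?_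
  obtain ⟨k, hk⟩ := exists_zeroAtInfty_eqOn_one hK
  refine Metric.tendstoUniformlyOn_iff.2 fun ε hε => ?_
  obtain ⟨i₀, hi₀⟩ := hg k (ε / 2) (by positivity)
  filter_upwards [eventually_ge_atTop i₀] with i hi m hm
  have := hi₀ i hi m
  rw [hk m hm, norm_one, one_mul] at this
  rw [Real.dist_eq, abs_sub_comm]
  linarith

lemma TendstoStrictly.continuous [IsDirectedOrder ι] [Nonempty ι] [LocallyCompactSpace M]
    [T2Space M] {g : ι → M → ℝ} {F : M → ℝ} (hg : TendstoStrictly g F)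
    (hcont : ∀ i, Continuous (g i)) : Continuous F :=
  hg.tendstoLocallyUniformly.continuous (Frequently.of_forall hcont)

end StrictConvergence

lemma Monotone.le_add_mul_sub_of_isLUB {ι : Type*} [Preorder ι] [IsDirectedOrder ι]
    {a b : ι → ℝ} {B C : ℝ} (ha : Monotone a) (hB : IsLUB (range b) B) (hC : 0 ≤ C)
    (hab : ∀ i j, i ≤ j → a j - a i ≤ C * (b j - b i)) (i j : ι) :
    a j ≤ a i + C * (B - b i) := by
  obtain ⟨k, hik, hjk⟩ := directed_of (· ≤ ·) i j
  calc a j ≤ a k := ha hjk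
    _ ≤ a i + C * (b k - b i) := by linarith [hab i k hik]
    _ ≤ a i + C * (B - b i) := by gcongr; exact hB.1 ⟨k, rfl⟩

lemma norm_mul_ofReal_sub_mul_ofReal (z : ℂ) (a b : ℝ) :
    ‖z * a - z * b‖ = ‖z‖ * |a - b| := by
  rw [← mul_sub, ← Complex.ofReal_sub, norm_mul, Complex.norm_real, Real.norm_eq_abs]

section Potential

variable {G : Type*} [Group G] [TopologicalSpace G] [MeasurableSpace G] (μ : Measure G)
  {M : Type*} [TopologicalSpace M] [MulAction G M]

noncomputable def pLamNorm (lam : RieffelB G) (h : C₀(M, ℂ)) (m : M) : ℝ :=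
  ∫ x, lam.1 x * ‖h (x⁻¹ • m)‖ ∂μ

noncomputable def pLamSup (h : C₀(M, ℂ)) (m : M) : ℝ :=
  ⨆ lam : RieffelB G, pLamNorm μ lam h m

lemma pLamC0_eq_ofReal_pLamNorm {h : C₀(M, ℂ)} (hpos : ∀ m, 0 ≤ h m) (lam : RieffelB G)
    (m : M) : pLamC0 μ lam h m = pLamNorm μ lam h m := by
  rw [pLamNorm, ← integral_complex_ofReal]
  refine integral_congr_ae (ae_of_all _ fun x => ?_)
  push_cast
  rw [Complex.norm_of_nonneg' (hpos _)]

lemma pLamNorm_bot (h : C₀(M, ℂ)) (m : M) : pLamNorm μ ⊥ h m = 0 := by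
  simp [pLamNorm, show (⊥ : RieffelB G).1 = 0 from rfl]

lemma tendstoStrictly_pLamNorm_iff {h : C₀(M, ℂ)} (hpos : ∀ m, 0 ≤ h m) (S : M → ℝ) :
    TendstoStrictly (fun lam => pLamNorm μ lam h) S ↔
      ∀ k : C₀(M, ℂ), ∀ ε > (0 : ℝ), ∃ lam₀ : RieffelB G,
        ∀ lam : RieffelB G, lam₀ ≤ lam →
          ∀ m : M, ‖k m * pLamC0 μ lam h m - k m * S m‖ ≤ ε := by
  simp only [TendstoStrictly, pLamC0_eq_ofReal_pLamNorm μ hpos, norm_mul_ofReal_sub_mul_ofReal]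

section Translation

variable [IsTopologicalGroup G] [BorelSpace G] [μ.IsMulLeftInvariant]

lemma pLamNorm_smul (lam : RieffelB G) (h : C₀(M, ℂ)) (x : G) (m : M) :
    pLamNorm μ lam h (x • m) = pLamNorm μ (lam.translate x) h m := by
  rw [pLamNorm, ← integral_mul_left_eq_self _ x]
  simp [pLamNorm, RieffelB.translate, mul_smul]

lemma pLamSup_smul (h : C₀(M, ℂ)) (x : G) (m : M) :
    pLamSup μ h (x • m) = pLamSup μ h m := by
  simp only [pLamSup, pLamNorm_smul]
  exact (RieffelB.translate_surjective x).iSup_comp fun lam => pLamNorm μ lam h m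

end Translation

variable [IsTopologicalGroup G] [BorelSpace G] [ContinuousSMul G M] [IsFiniteMeasureOnCompacts μ]

lemma integrable_pLamNorm_integrand (lam : RieffelB G) (h : C₀(M, ℂ)) (m : M) :
    Integrable (fun x => lam.1 x * ‖h (x⁻¹ • m)‖) μ :=
  (lam.integrable μ).mul_bdd
    (by fun_prop : Continuous fun x : G => ‖h (x⁻¹ • m)‖).aestronglyMeasurable
    (ae_of_all _ fun x => by rw [norm_norm]; exact h.norm_coe_le_norm _)

lemma pLamNorm_mono (h : C₀(M, ℂ)) (m : M) :
    Monotone fun lam : RieffelB G => pLamNorm μ lam h m := fun lam lam' hle =>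
  integral_mono (integrable_pLamNorm_integrand μ lam h m)
    (integrable_pLamNorm_integrand μ lam' h m) fun x =>
    mul_le_mul_of_nonneg_right (hle x) (norm_nonneg _)

lemma pLamNorm_mul_sub_le {h₁ h₂ : C₀(M, ℂ)} {m : M} {δ : ℝ}
    (hδ : ∀ x : G, ‖h₂ (x⁻¹ • m)‖ ≤ δ) {lam lam' : RieffelB G}
    (hle : lam ≤ lam') :
    pLamNorm μ lam' (h₁ * h₂) m - pLamNorm μ lam (h₁ * h₂) m ≤
      δ * (pLamNorm μ lam' h₁ m - pLamNorm μ lam h₁ m) := by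
  have I := fun lam h => integrable_pLamNorm_integrand μ lam h m
  simp only [pLamNorm]
  rw [← integral_sub (I lam' _) (I lam _), ← integral_sub (I lam' _) (I lam _),
    ← integral_const_mul]
  refine integral_mono ((I lam' _).sub (I lam _)) (((I lam' _).sub (I lam _)).const_mul δ)
    fun x => ?_
  have hw : 0 ≤ (lam'.1 x - lam.1 x) * ‖h₁ (x⁻¹ • m)‖ :=
    mul_nonneg (sub_nonneg.2 (hle x)) (norm_nonneg _)
  simp only [ZeroAtInftyContinuousMap.mul_apply, norm_mul]
  nlinarith [mul_le_mul_of_nonneg_left (hδ x) hw]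

lemma pLamNorm_mul_le {h₁ h₂ : C₀(M, ℂ)} {m : M} {δ : ℝ}
    (hδ : ∀ x : G, ‖h₂ (x⁻¹ • m)‖ ≤ δ) (lam : RieffelB G) :
    pLamNorm μ lam (h₁ * h₂) m ≤ δ * pLamNorm μ lam h₁ m := by
  simpa [pLamNorm_bot] using pLamNorm_mul_sub_le μ hδ (bot_le (a := lam))

lemma dist_pLamNorm_le (lam : RieffelB G) (h : C₀(M, ℂ)) {m m' : M} {δ : ℝ}
    (hδ : ∀ x ∈ tsupport lam.1, |‖h (x⁻¹ • m)‖ - ‖h (x⁻¹ • m')‖| ≤ δ) :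
    dist (pLamNorm μ lam h m) (pLamNorm μ lam h m') ≤ δ * ∫ x, lam.1 x ∂μ := by
  rw [Real.dist_eq, pLamNorm, pLamNorm, ← integral_sub (integrable_pLamNorm_integrand μ lam h m)
    (integrable_pLamNorm_integrand μ lam h m'), ← integral_const_mul, ← Real.norm_eq_abs]
  refine norm_integral_le_of_norm_le ((lam.integrable μ).const_mul δ) (ae_of_all _ fun x => ?_)
  rw [← mul_sub, norm_mul, Real.norm_of_nonneg (lam.nonneg x), Real.norm_eq_abs, mul_comm δ]
  by_cases hx : x ∈ tsupport lam.1
  · exact mul_le_mul_of_nonneg_left (hδ x hx) (lam.nonneg x)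
  · simp [image_eq_zero_of_notMem_tsupport hx]

lemma continuous_pLamNorm (lam : RieffelB G) (h : C₀(M, ℂ)) :
    Continuous (pLamNorm μ lam h) := by
  refine continuous_iff_continuousAt.2 fun m₀ => Metric.tendsto_nhds.2 fun ε hε => ?_
  set c := ∫ x, lam.1 x ∂μ
  have hc : 0 ≤ c := integral_nonneg lam.nonneg
  obtain ⟨v, hv, hvδ⟩ := lam.2.2.1.mem_uniformity_of_prod
    (f := fun m (x : G) => ‖h (x⁻¹ • m)‖) (by fun_prop) (mem_univ m₀)
    (Metric.dist_mem_uniformity (ε := ε / (c + 1)) (by positivity))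
  filter_upwards [nhdsWithin_univ m₀ ▸ hv] with m hm
  calc dist (pLamNorm μ lam h m) (pLamNorm μ lam h m₀) ≤ ε / (c + 1) * c :=
        dist_pLamNorm_le μ lam h fun x hx => (hvδ m hm x hx).le
    _ < ε / (c + 1) * (c + 1) := by gcongr; linarith
    _ = ε := div_mul_cancel₀ ε (by positivity)

end Potential

section Products

variable {G : Type*} [Group G] [TopologicalSpace G] [IsTopologicalGroup G] [MeasurableSpace G]
  [BorelSpace G] (μ : Measure G) [IsFiniteMeasureOnCompacts μ]
  {M : Type*} [TopologicalSpace M] [MulAction G M] [ContinuousSMul G M]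

lemma IsProperC0.exists_tendstoStrictly [LocallyCompactSpace M] [T2Space M] {h : C₀(M, ℂ)}
    (hpos : ∀ m, 0 ≤ h m) (hh : IsProperC0 μ h) :
    ∃ S : M →ᵇ ℝ, (∀ m, IsLUB (range fun lam => pLamNorm μ lam h m) (S m)) ∧
      TendstoStrictly (fun lam => pLamNorm μ lam h) S := by
  obtain ⟨F, hF⟩ := hh
  have hT : ∀ m, Tendsto (fun lam => (pLamNorm μ lam h m : ℂ)) atTop (𝓝 (F m)) := by
    intro m
    obtain ⟨k, hk⟩ := exists_zeroAtInfty_eqOn_one (isCompact_singleton (x := m))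
    refine Metric.tendsto_nhds.2 fun ε hε => ?_
    obtain ⟨lam₀, hlam₀⟩ := hF k (ε / 2) (by positivity)
    filter_upwards [eventually_ge_atTop lam₀] with lam hlam
    have := hlam₀ lam hlam m
    rw [hk m rfl, one_mul, one_mul, pLamC0_eq_ofReal_pLamNorm μ hpos] at this
    rw [dist_eq_norm]
    linarith
  have hre : ∀ m, Tendsto (fun lam => pLamNorm μ lam h m) atTop (𝓝 (F m).re) := fun m => by
    simpa [Function.comp_def] using (Complex.continuous_re.tendsto _).comp (hT m)
  have hreal : ∀ m, F m = (F m).re := fun m =>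
    tendsto_nhds_unique (hT m) ((Complex.continuous_ofReal.tendsto _).comp (hre m))
  refine ⟨F.comp _ Complex.reCLM.lipschitz, fun m => isLUB_of_tendsto_atTop
    (pLamNorm_mono μ h m) (hre m), (tendstoStrictly_pLamNorm_iff μ hpos _).2 fun k ε hε => ?_⟩
  simpa only [BoundedContinuousFunction.comp_apply, Complex.reCLM_apply, ← hreal]
    using hF k ε hε

variable (h₁ h₂ : C₀(M, ℂ)) {m : M} {S : ℝ}

lemma isLUB_pLamSup_mul (hS : IsLUB (range fun lam : RieffelB G => pLamNorm μ lam h₁ m) S) :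
    IsLUB (range fun lam => pLamNorm μ lam (h₁ * h₂) m) (pLamSup μ (h₁ * h₂) m) ∧
      ∀ lam, pLamSup μ (h₁ * h₂) m - pLamNorm μ lam (h₁ * h₂) m ≤
        ‖h₂‖ * (S - pLamNorm μ lam h₁ m) := by
  have hle := (pLamNorm_mono μ (h₁ * h₂) m).le_add_mul_sub_of_isLUB hS (norm_nonneg h₂)
    fun _ _ => pLamNorm_mul_sub_le μ fun x => h₂.norm_coe_le_norm _
  have hbdd : BddAbove (range fun lam => pLamNorm μ lam (h₁ * h₂) m) :=
    ⟨_, forall_mem_range.2 (hle ⊥)⟩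
  exact ⟨isLUB_ciSup hbdd, fun lam => by have := ciSup_le (hle lam); rw [pLamSup]; linarith⟩

lemma abs_pLamSup_mul_le (hS : IsLUB (range fun lam : RieffelB G => pLamNorm μ lam h₁ m) S)
    {δ : ℝ} (hδ : ∀ x : G, ‖h₂ (x⁻¹ • m)‖ ≤ δ) :
    |pLamSup μ (h₁ * h₂) m| ≤ δ * S := by
  have hLUB := (isLUB_pLamSup_mul μ h₁ h₂ hS).1
  have hδ0 : 0 ≤ δ := (norm_nonneg _).trans (hδ 1)
  rw [abs_of_nonneg (by simpa [pLamNorm_bot] using hLUB.1 ⟨⊥, rfl⟩)]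
  exact hLUB.2 (forall_mem_range.2 fun lam => (pLamNorm_mul_le μ hδ lam).trans
    (mul_le_mul_of_nonneg_left (hS.1 ⟨lam, rfl⟩) hδ0))

lemma tendstoStrictly_pLamSup_mul {S : M → ℝ}
    (hS : ∀ m, IsLUB (range fun lam : RieffelB G => pLamNorm μ lam h₁ m) (S m))
    (hT : TendstoStrictly (fun lam => pLamNorm μ lam h₁) S) :
    TendstoStrictly (fun lam => pLamNorm μ lam (h₁ * h₂)) (pLamSup μ (h₁ * h₂)) :=
  hT.of_abs_sub_le (norm_nonneg h₂) fun lam m => by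
    obtain ⟨hLUB, hgap⟩ := isLUB_pLamSup_mul μ h₁ h₂ (hS m)
    rw [abs_sub_comm, abs_of_nonneg (sub_nonneg.2 (hLUB.1 ⟨lam, rfl⟩)), abs_sub_comm,
      abs_of_nonneg (sub_nonneg.2 ((hS m).1 ⟨lam, rfl⟩))]
    exact hgap lam

end Products

theorem stmt8_general
    {G : Type*} [Group G] [TopologicalSpace G] [IsTopologicalGroup G]
    [MeasurableSpace G] [BorelSpace G]
    (μ : Measure G) [μ.IsHaarMeasure]
    {M : Type*} [TopologicalSpace M] [LocallyCompactSpace M] [T2Space M]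
    [MulAction G M] [ContinuousSMul G M]
    (h₁ h₂ : C₀(M, ℂ))
    (h₁pos : ∀ m : M, 0 ≤ h₁ m) (h₂pos : ∀ m : M, 0 ≤ h₂ m)
    (h₁proper : IsProperC0 μ h₁) :
    ∃ F : M →ᵇ ℂ,
      (∀ k : C₀(M, ℂ), ∀ ε > (0 : ℝ), ∃ lam₀ : RieffelB G,
        ∀ lam : RieffelB G, lam₀ ≤ lam →
          ∀ m : M, ‖k m * pLamC0 μ lam (h₁ * h₂) m - k m * F m‖ ≤ ε) ∧
      (∀ (x : G) (m : M), F (x • m) = F m) ∧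
      (∀ ε > (0 : ℝ), ∃ K : Set M, IsCompact K ∧
        ∀ m : M, (∀ x : G, x • m ∉ K) → ‖F m‖ ≤ ε) := by
  obtain ⟨S₁, hS₁, hT₁⟩ := h₁proper.exists_tendstoStrictly μ h₁pos
  have hT := tendstoStrictly_pLamSup_mul μ h₁ h₂ hS₁ hT₁
  have hF_le : ∀ m δ, (∀ x : G, ‖h₂ (x⁻¹ • m)‖ ≤ δ) →
      ‖(pLamSup μ (h₁ * h₂) m : ℂ)‖ ≤ δ * ‖S₁‖ := fun m δ hδ => by
    rw [Complex.norm_real, Real.norm_eq_abs]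
    exact (abs_pLamSup_mul_le μ h₁ h₂ (hS₁ m) hδ).trans <| mul_le_mul_of_nonneg_left
      ((le_abs_self _).trans (S₁.norm_coe_le_norm m)) ((norm_nonneg _).trans (hδ 1))
  let F : M →ᵇ ℂ := .ofNormedAddCommGroup (fun m => (pLamSup μ (h₁ * h₂) m : ℂ))
    (Complex.continuous_ofReal.comp (hT.continuous (continuous_pLamNorm μ · _)))
    (‖h₂‖ * ‖S₁‖) fun m => hF_le m _ fun _ => h₂.norm_coe_le_norm _
  have h₁₂pos : ∀ m, 0 ≤ (h₁ * h₂) m := fun m => mul_nonneg (h₁pos m) (h₂pos m)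
  refine ⟨F, (tendstoStrictly_pLamNorm_iff μ h₁₂pos _).1 hT,
    fun x m => congrArg Complex.ofReal (pLamSup_smul μ _ x m), fun ε hε => ?_⟩
  obtain ⟨K, hK, hsmall⟩ :=
    h₂.exists_isCompact_norm_le (δ := ε / (‖S₁‖ + 1)) (by positivity)
  refine ⟨K, hK, fun m hm => (hF_le m _ fun x => hsmall _ (hm x⁻¹)).trans ?_⟩
  rw [div_mul_eq_mul_div, div_le_iff₀ (by positivity)]
  nlinarith [norm_nonneg S₁]

/-- If `h₁, h₂ ∈ C₀(M, ℂ)` are nonnegative and `α`-proper, then `h₁h₂` is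
`α`-proper and its strict limit `F ∈ C_b(M, ℂ)` is `G`-invariant and "vanishes at infinity
modulo `G`": for each `ε > 0` there is a compact `K ⊆ M` with `|F(m)| ≤ ε` whenever the
orbit of `m` misses `K`. -/
theorem stmt8
    {G : Type*} [Group G] [TopologicalSpace G] [IsTopologicalGroup G]
    [LocallyCompactSpace G] [MeasurableSpace G] [BorelSpace G]
    (μ : Measure G) [μ.IsHaarMeasure]
    {M : Type*} [TopologicalSpace M] [LocallyCompactSpace M] [T2Space M]
    [MulAction G M] [ContinuousSMul G M]
    (h₁ h₂ : C₀(M, ℂ))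
    (h₁pos : ∀ m : M, 0 ≤ h₁ m) (h₂pos : ∀ m : M, 0 ≤ h₂ m)
    (h₁proper : IsProperC0 μ h₁) (h₂proper : IsProperC0 μ h₂) :
    ∃ F : M →ᵇ ℂ,
      (∀ k : C₀(M, ℂ), ∀ ε > (0 : ℝ), ∃ lam₀ : RieffelB G,
        ∀ lam : RieffelB G, lam₀ ≤ lam →
          ∀ m : M, ‖k m * pLamC0 μ lam (h₁ * h₂) m - k m * F m‖ ≤ ε) ∧
      (∀ (x : G) (m : M), F (x • m) = F m) ∧
      (∀ ε > (0 : ℝ), ∃ K : Set M, IsCompact K ∧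
        ∀ m : M, (∀ x : G, x • m ∉ K) → ‖F m‖ ≤ ε) :=
  stmt8_general μ h₁ h₂ h₁pos h₂pos h₁proper
end

section
/- Let G act properly and continuously on a locally compact Hausdorff space M (i.e., the map G × M → M × M, (x,m) ↦ (x•m, m), is proper), and suppose the orbit space M/G with the quotient topology is paracompact. Then there exists a continuous function h : M → ℝ with h(m) > 0 for every m ∈ M such that h(x⁻¹•m) = Δ(x)·h(m) for all x ∈ G and m ∈ M. -/
/-!
Average compactly supported bumps along orbits: for `g ∈ C_c(M)` the orbit integral
`m ↦ ∫ g (x • m) dx` is continuous (properness makes the integrand uniformly compactly supported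
on compacts of `M`) and, by the modular relation, gets multiplied by `Δ(y)⁻¹` under `m ↦ y • m`.
It is positive on the saturation of the support of `g`. These saturations cover `M`, so a partition
of unity on the paracompact orbit space glues such orbit integrals into a function that is
positive everywhere; being a combination of them with `G`-invariant coefficients, it keeps the
same transformation rule.
-/

open MeasureTheory Set Function
open scoped Pointwise

namespace PartitionOfUnity

variable {ι X Y : Type*} [TopologicalSpace X] [TopologicalSpace Y] {s : Set X}
  (φ : PartitionOfUnity ι X s)

theorem continuous_finsum_comp_mul {p : Y → X} (hp : Continuous p) {a : ι → Y → ℝ}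
    (ha : ∀ i, Continuous (a i)) : Continuous fun y => ∑ᶠ i, φ i (p y) * a i y :=
  continuous_finsum (fun i => ((φ i).continuous.comp hp).mul (ha i)) <|
    (φ.locallyFinite.preimage_continuous hp).subset fun _ => support_mul_subset_left _ _

theorem finsum_mul_pos {x : X} (hx : x ∈ s) {a : ι → ℝ} (ha : ∀ i, 0 ≤ a i)
    (hpos : ∀ i, 0 < φ i x → 0 < a i) : 0 < ∑ᶠ i, φ i x * a i := by
  obtain ⟨i, hi⟩ := φ.exists_pos hx
  exact finsum_pos (fun i => mul_nonneg (φ.nonneg i x) (ha i)) ⟨i, mul_pos hi (hpos i hi)⟩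
    ((φ.locallyFinite.point_finite x).subset fun _ hi => support_mul_subset_left _ _ hi)

end PartitionOfUnity

section ProperSMul

variable {G M : Type*} [Group G] [TopologicalSpace G] [TopologicalSpace M] [MulAction G M]
  [ProperSMul G M] {g : M → ℝ}

theorem HasCompactSupport.exists_isCompact_smul_eq_zero (hg : HasCompactSupport g) {L : Set M}
    (hL : IsCompact L) : ∃ C : Set G, IsCompact C ∧ ∀ m ∈ L, ∀ x ∉ C, g (x • m) = 0 :=
  ⟨_, ProperSMul.isCompact_setOfPred_inter_nonempty hL hg, fun m hm x hx => by_contra fun h =>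
    hx ⟨x • m, smul_mem_smul_set hm, subset_tsupport _ h⟩⟩

theorem HasCompactSupport.comp_smul_right [R1Space G] (hg : HasCompactSupport g) (m : M) :
    HasCompactSupport fun x : G => g (x • m) := by
  obtain ⟨C, hC, hCg⟩ := hg.exists_isCompact_smul_eq_zero (G := G) isCompact_singleton
  exact HasCompactSupport.intro hC fun x hx => hCg m rfl x hx

end ProperSMul

section OrbitIntegral

variable {G M : Type*} [Group G] [MulAction G M] [MeasurableSpace G]

variable (μ : Measure G) in
noncomputable def orbitIntegral (g : M → ℝ) (m : M) : ℝ := ∫ x, g (x • m) ∂μ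

variable {μ : Measure G} {g : M → ℝ}

theorem orbitIntegral_nonneg (hg : 0 ≤ g) (m : M) : 0 ≤ orbitIntegral μ g m :=
  integral_nonneg fun _ => hg _

theorem orbitIntegral_smul {y : G} {c : ℝ}
    (hy : ∀ f : G → ℝ, Integrable f μ → ∫ x, f (x * y) ∂μ = c * ∫ x, f x ∂μ)
    {m : M} (hg : Integrable (fun x => g (x • m)) μ) :
    orbitIntegral μ g (y • m) = c * orbitIntegral μ g m := by
  simp only [orbitIntegral, ← hy _ hg, mul_smul]

variable [TopologicalSpace G] [TopologicalSpace M] [ProperSMul G M] [OpensMeasurableSpace G]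
  [IsFiniteMeasureOnCompacts μ]

theorem continuous_orbitIntegral [LocallyCompactSpace M] (hg : Continuous g)
    (hgc : HasCompactSupport g) : Continuous (orbitIntegral μ g) := by
  refine continuous_iff_continuousAt.2 fun m₀ => ?_
  obtain ⟨K, hK, hKm₀⟩ := exists_compact_mem_nhds m₀
  obtain ⟨C, hC, hCg⟩ := hgc.exists_isCompact_smul_eq_zero (G := G) hK
  exact (continuousOn_integral_of_compact_support (f := fun m (x : G) => g (x • m)) hC
    (hg.comp (continuous_snd.smul continuous_fst)).continuousOn
    fun m x hm hx => hCg m hm x hx).continuousAt hKm₀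

variable [R1Space G]

theorem integrable_comp_smul_right (hg : Continuous g) (hgc : HasCompactSupport g) (m : M) :
    Integrable (fun x : G => g (x • m)) μ :=
  (hg.comp (continuous_id.smul continuous_const)).integrable_of_hasCompactSupport
    (hgc.comp_smul_right m)

theorem orbitIntegral_pos [μ.IsOpenPosMeasure] (hg : Continuous g) (hgc : HasCompactSupport g)
    (hg0 : 0 ≤ g) {m : M}
    (hm : Quotient.mk (MulAction.orbitRel G M) m ∈ Quotient.mk _ '' support g) :
    0 < orbitIntegral μ g m := by
  obtain ⟨n, hn, hnm⟩ := hm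
  obtain ⟨c, rfl⟩ := MulAction.orbitRel_apply.1 (Quotient.exact hnm)
  exact (hg.comp (continuous_id.smul continuous_const)
    ).integral_pos_of_hasCompactSupport_nonneg_nonzero (hgc.comp_smul_right m) (fun _ => hg0 _) hn

end OrbitIntegral

theorem exists_partitionOfUnity_isSubordinate_image_support {G M : Type*} [Group G]
    [TopologicalSpace M] [MulAction G M] [ContinuousConstSMul G M]
    [RegularSpace M] [LocallyCompactSpace M] [T2Space (Quotient (MulAction.orbitRel G M))]
    [ParacompactSpace (Quotient (MulAction.orbitRel G M))] :
    ∃ (g : M → C(M, ℝ)) (φ : PartitionOfUnity M (Quotient (MulAction.orbitRel G M)) univ),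
      (∀ i, HasCompactSupport (g i)) ∧ (∀ i, 0 ≤ g i) ∧
        φ.IsSubordinate fun i => Quotient.mk _ '' support (g i) := by
  choose g hg1 _ hgc hg01 using fun m : M =>
    exists_continuous_one_zero_of_isCompact isCompact_singleton isClosed_empty
      (disjoint_empty {m})
  have hcover : univ ⊆ ⋃ i, Quotient.mk (MulAction.orbitRel G M) '' support (g i) := by
    rintro ⟨m⟩ -
    exact mem_iUnion.2 ⟨m, m, by simp [hg1 m rfl], rfl⟩
  obtain ⟨φ, hφ⟩ := PartitionOfUnity.exists_isSubordinate isClosed_univ _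
    (fun i => MulAction.isOpenQuotientMap_quotientMk.isOpenMap _ (g i).continuous.isOpen_support)
    hcover
  exact ⟨g, φ, hgc, fun i m => (hg01 i m).1, hφ⟩

theorem stmt14_general
    {G : Type*} [Group G] [TopologicalSpace G] [IsTopologicalGroup G]
    [MeasurableSpace G] [BorelSpace G]
    (μ : Measure G) [μ.IsHaarMeasure]
    (Δ : G → ℝ) (hΔpos : ∀ y, 0 < Δ y)
    (hΔ : ∀ (y : G) (f : G → ℝ), Integrable f μ →
      ∫ x, f (x * y) ∂μ = (Δ y)⁻¹ * ∫ x, f x ∂μ)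
    {M : Type*} [TopologicalSpace M] [LocallyCompactSpace M] [T2Space M]
    [MulAction G M] [ContinuousSMul G M]
    (hproper : ∀ K : Set (M × M), IsCompact K →
      IsCompact ((fun p : G × M => (p.1 • p.2, p.2)) ⁻¹' K))
    (hpara : ParacompactSpace (Quotient (MulAction.orbitRel G M))) :
    ∃ h : M → ℝ, Continuous h ∧ (∀ m : M, 0 < h m) ∧
      ∀ (x : G) (m : M), h (x⁻¹ • m) = Δ x * h m := by
  have : ProperSMul G M := ⟨isProperMap_iff_isCompact_preimage.2 ⟨by fun_prop, hproper⟩⟩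
  obtain ⟨g, φ, hgc, hg0, hφ⟩ :=
    exists_partitionOfUnity_isSubordinate_image_support (G := G) (M := M)
  set h : M → ℝ := fun m => ∑ᶠ i, φ i (Quotient.mk _ m) * orbitIntegral μ (g i) m
  have h_smul (y : G) (m : M) : h (y • m) = (Δ y)⁻¹ * h m := by
    simp only [h, MulAction.orbitRel.Quotient.quotient_smul_eq, mul_finsum]
    refine finsum_congr fun i => ?_
    rw [orbitIntegral_smul (hΔ y) (integrable_comp_smul_right (g i).continuous (hgc i) m),
      mul_left_comm]
  refine ⟨h, φ.continuous_finsum_comp_mul continuous_quot_mk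
    fun i => continuous_orbitIntegral (g i).continuous (hgc i), fun m => ?_, fun x m => ?_⟩
  · exact φ.finsum_mul_pos (mem_univ _) (fun i => orbitIntegral_nonneg (hg0 i) m)
      fun i hi => orbitIntegral_pos (g i).continuous (hgc i) (hg0 i)
        (hφ i (subset_tsupport _ hi.ne'))
  · rw [← mul_inv_cancel_left₀ (hΔpos x).ne' (h (x⁻¹ • m)), ← h_smul, smul_inv_smul]

/-- If `G` acts properly and continuously on a locally compact Hausdorff
space `M` with paracompact orbit space, then there is a continuous strictly positive
function `h : M → ℝ` with `h(x⁻¹ • m) = Δ(x) h(m)` for all `x ∈ G`, `m ∈ M`, where `Δ` is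
the modular function of `G`. -/
theorem stmt14
    {G : Type*} [Group G] [TopologicalSpace G] [IsTopologicalGroup G]
    [LocallyCompactSpace G] [MeasurableSpace G] [BorelSpace G]
    (μ : Measure G) [μ.IsHaarMeasure]
    (Δ : G → ℝ) (hΔpos : ∀ y, 0 < Δ y) (hΔcont : Continuous Δ)
    (hΔhom : ∀ x y : G, Δ (x * y) = Δ x * Δ y)
    (hΔ : ∀ (y : G) (f : G → ℝ), Integrable f μ →
      ∫ x, f (x * y) ∂μ = (Δ y)⁻¹ * ∫ x, f x ∂μ)
    {M : Type*} [TopologicalSpace M] [LocallyCompactSpace M] [T2Space M]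
    [MulAction G M] [ContinuousSMul G M]
    (hproper : ∀ K : Set (M × M), IsCompact K →
      IsCompact ((fun p : G × M => (p.1 • p.2, p.2)) ⁻¹' K))
    (hpara : ParacompactSpace (Quotient (MulAction.orbitRel G M))) :
    ∃ h : M → ℝ, Continuous h ∧ (∀ m : M, 0 < h m) ∧
      ∀ (x : G) (m : M), h (x⁻¹ • m) = Δ x * h m :=
  stmt14_general μ Δ hΔpos hΔ hproper hpara
end
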